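/- arXiv:1204.1299 — 6 statements merged into one kernel-verified Lean document; each statement's English description precedes it below -/
import Mathlib

section
/- For any two polynomials P, Q ∈ ℂ[x_1,x_2,x_3], the Poisson brackets {·,·}_P and {·,·}_Q defined by {x_{σ1},x_{σ2}}_H = ∂H/∂x_{σ3} (for even permutations σ) are compatible: every linear combination a{·,·}_P + b{·,·}_Q is again a Poisson bracket, namely {·,·}_{aP+bQ}. -/
open MvPolynomial

/-- The bracket on `ℂ[x₁,x₂,x₃]` determined by `{x_{σ1}, x_{σ2}}_H = ∂H/∂x_{σ3}` for even
permutations σ, extended as a skew-symmetric biderivation. -/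
noncomputable def br3 (H F G : MvPolynomial (Fin 3) ℂ) : MvPolynomial (Fin 3) ℂ :=
  pderiv 2 H * (pderiv 0 F * pderiv 1 G - pderiv 1 F * pderiv 0 G) +
  pderiv 0 H * (pderiv 1 F * pderiv 2 G - pderiv 2 F * pderiv 1 G) +
  pderiv 1 H * (pderiv 2 F * pderiv 0 G - pderiv 0 F * pderiv 2 G)

lemma pd_comm (i j : Fin 3) (f : MvPolynomial (Fin 3) ℂ) :
    pderiv i (pderiv j f) = pderiv j (pderiv i f) := by
  induction f using MvPolynomial.induction_on with
  | C a => simp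
  | add p q hp hq => simp [hp, hq]
  | mul_X p k hp =>
      simp only [map_add, pderiv_mul, pderiv_X, hp, Pi.single_apply]
      split_ifs <;> simp <;> ring

lemma c10 (f : MvPolynomial (Fin 3) ℂ) :
    pderiv (1 : Fin 3) (pderiv (0 : Fin 3) f) = pderiv 0 (pderiv 1 f) := pd_comm _ _ _

lemma c20 (f : MvPolynomial (Fin 3) ℂ) :
    pderiv (2 : Fin 3) (pderiv (0 : Fin 3) f) = pderiv 0 (pderiv 2 f) := pd_comm _ _ _

lemma c21 (f : MvPolynomial (Fin 3) ℂ) :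
    pderiv (2 : Fin 3) (pderiv (1 : Fin 3) f) = pderiv 1 (pderiv 2 f) := pd_comm _ _ _

lemma jacobi3 (R F G H : MvPolynomial (Fin 3) ℂ) :
    br3 R F (br3 R G H) + br3 R G (br3 R H F) + br3 R H (br3 R F G) = 0 := by
  simp only [br3, map_add, map_sub, pderiv_mul, c10, c20, c21]
  ring

/-- The Poisson brackets `{·,·}_P` and `{·,·}_Q` are compatible: every linear combination
`a{·,·}_P + b{·,·}_Q` equals `{·,·}_{aP+bQ}` and is again a Poisson bracket
(it satisfies the Jacobi identity). -/
theorem stmt_2 (P Q : MvPolynomial (Fin 3) ℂ) (a b : ℂ) :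
    (∀ F G : MvPolynomial (Fin 3) ℂ,
      a • br3 P F G + b • br3 Q F G = br3 (a • P + b • Q) F G) ∧
    (∀ F G H : MvPolynomial (Fin 3) ℂ,
      br3 (a • P + b • Q) F (br3 (a • P + b • Q) G H) +
      br3 (a • P + b • Q) G (br3 (a • P + b • Q) H F) +
      br3 (a • P + b • Q) H (br3 (a • P + b • Q) F G) = 0) := by
  constructor
  · intro F G
    simp only [br3, map_add, map_smul, smul_add, smul_eq_C_mul, pderiv_C_mul]
    ring
  · intro F G H
    exact jacobi3 _ F G H
end

section
/- Let F_od be the commutative algebra generated by f, g with relation (f+c)g² = P(f) + Q(f)g, where deg P ≤ 3, deg Q ≤ 2, c ∈ ℂ. Then the identity (g_1−g_2)·[(f_1+c)g_1 + (f_2+c)g_2 − ½Q(f_1) − ½Q(f_2)] = (f_1−f_2)·[(P(f_1)−P(f_2))/(f_1−f_2) + (Q(f_1)−Q(f_2))(g_1+g_2)/(2(f_1−f_2)) − g_1 g_2] holds in F_od ⊗ F_od, so the two defining equations for λ_od agree. -/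
open MvPolynomial
open scoped TensorProduct

/-- The defining relation `(f+c)g² − P(f) − Q(f)g` of the algebra `F_od`, in `ℂ[f,g]`
(variable `X 0` is `f`, variable `X 1` is `g`). -/
noncomputable def odRel (P Q : Polynomial ℂ) (c : ℂ) : MvPolynomial (Fin 2) ℂ :=
  (X 0 + C c) * X 1 ^ 2 - Polynomial.aeval (X 0) P - Polynomial.aeval (X 0) Q * X 1

/-- The commutative algebra `F_od = ℂ[f,g]/((f+c)g² − P(f) − Q(f)g)`. -/
noncomputable abbrev Fod (P Q : Polynomial ℂ) (c : ℂ) : Type :=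
  MvPolynomial (Fin 2) ℂ ⧸ Ideal.span {odRel P Q c}

/-!
Once the divided differences are cleared, the difference of the two sides is
`[(f₁+c)g₁² − P(f₁) − Q(f₁)g₁] − [(f₂+c)g₂² − P(f₂) − Q(f₂)g₂]`, and each bracket vanishes by
the defining relation of `F_od` pushed into the corresponding tensor factor.
-/

section OdPoint

variable {K A B : Type*} [CommSemiring K] [Semiring A] [Algebra K A] [Semiring B] [Algebra K B]

def IsOdPoint (P Q : Polynomial K) (c : K) (x y : A) : Prop :=
  (x + algebraMap K A c) * y ^ 2 = Polynomial.aeval x P + Polynomial.aeval x Q * y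

theorem IsOdPoint.map {P Q : Polynomial K} {c : K} {x y : A} (h : IsOdPoint P Q c x y)
    (φ : A →ₐ[K] B) : IsOdPoint P Q c (φ x) (φ y) := by
  have := congrArg φ h
  simpa only [IsOdPoint, map_add, map_mul, map_pow, AlgHom.commutes,
    Polynomial.aeval_algHom_apply] using this

end OdPoint

theorem isOdPoint_iff_map_odRel_eq_zero {A : Type*} [Ring A] [Algebra ℂ A]
    {P Q : Polynomial ℂ} {c : ℂ} (φ : MvPolynomial (Fin 2) ℂ →ₐ[ℂ] A) :
    IsOdPoint P Q c (φ (X 0)) (φ (X 1)) ↔ φ (odRel P Q c) = 0 := by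
  rw [odRel, map_sub, map_sub, sub_sub, sub_eq_zero, IsOdPoint]
  simp only [map_add, map_mul, map_pow, algHom_C, Polynomial.aeval_algHom_apply]

theorem Fod.isOdPoint (P Q : Polynomial ℂ) (c : ℂ) :
    IsOdPoint P Q c (Ideal.Quotient.mk _ (X 0) : Fod P Q c) (Ideal.Quotient.mk _ (X 1)) :=
  (isOdPoint_iff_map_odRel_eq_zero (Ideal.Quotient.mkₐ ℂ _)).2 <|
    Ideal.Quotient.eq_zero_iff_mem.2 (Ideal.subset_span rfl)

theorem aeval_mul_divDiff {K A : Type*} [CommRing K] [CommRing A] [Algebra K A]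
    {p : Polynomial K} {δ : MvPolynomial (Fin 2) K}
    (hδ : (X 0 - X 1) * δ = Polynomial.aeval (X 0) p - Polynomial.aeval (X 1) p) (x₁ x₂ : A) :
    (x₁ - x₂) * MvPolynomial.aeval ![x₁, x₂] δ =
      Polynomial.aeval x₁ p - Polynomial.aeval x₂ p := by
  have := congrArg (MvPolynomial.aeval ![x₁, x₂]) hδ
  rwa [map_mul, map_sub, map_sub, ← Polynomial.aeval_algHom_apply,
    ← Polynomial.aeval_algHom_apply, aeval_X, aeval_X] at this

theorem IsOdPoint.secant_identity {K A : Type*} [Field K] [NeZero (2 : K)] [CommRing A]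
    [Algebra K A] {P Q : Polynomial K} {c : K} {x₁ y₁ x₂ y₂ dP dQ : A}
    (h₁ : IsOdPoint P Q c x₁ y₁) (h₂ : IsOdPoint P Q c x₂ y₂)
    (hP : (x₁ - x₂) * dP = Polynomial.aeval x₁ P - Polynomial.aeval x₂ P)
    (hQ : (x₁ - x₂) * dQ = Polynomial.aeval x₁ Q - Polynomial.aeval x₂ Q) :
    (y₁ - y₂) * ((x₁ + algebraMap K A c) * y₁ + (x₂ + algebraMap K A c) * y₂
        - ((1 : K) / 2) • Polynomial.aeval x₁ Q - ((1 : K) / 2) • Polynomial.aeval x₂ Q)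
      = (x₁ - x₂) * (dP + ((1 : K) / 2) • (dQ * (y₁ + y₂)) - y₁ * y₂) := by
  have half : algebraMap K A (1 / 2) * 2 = 1 := by
    rw [← map_ofNat (algebraMap K A) 2, ← map_mul, one_div, inv_mul_cancel₀ two_ne_zero, map_one]
  rw [IsOdPoint] at h₁ h₂
  simp only [Algebra.smul_def]
  linear_combination h₁ - h₂ - hP - algebraMap K A (1 / 2) * (y₁ + y₂) * hQ
    - (Polynomial.aeval x₁ Q * y₁ - Polynomial.aeval x₂ Q * y₂) * half

theorem stmt_7_general (P Q : Polynomial ℂ) (c : ℂ)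
    (δP δQ : MvPolynomial (Fin 2) ℂ)
    (hδP : (X 0 - X 1) * δP =
      Polynomial.aeval (X (0 : Fin 2) : MvPolynomial (Fin 2) ℂ) P - Polynomial.aeval (X 1) P)
    (hδQ : (X 0 - X 1) * δQ =
      Polynomial.aeval (X (0 : Fin 2) : MvPolynomial (Fin 2) ℂ) Q - Polynomial.aeval (X 1) Q) :
    let f : Fod P Q c := Ideal.Quotient.mk _ (X 0)
    let g : Fod P Q c := Ideal.Quotient.mk _ (X 1)
    let f₁ : Fod P Q c ⊗[ℂ] Fod P Q c := f ⊗ₜ 1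
    let f₂ : Fod P Q c ⊗[ℂ] Fod P Q c := 1 ⊗ₜ f
    let g₁ : Fod P Q c ⊗[ℂ] Fod P Q c := g ⊗ₜ 1
    let g₂ : Fod P Q c ⊗[ℂ] Fod P Q c := 1 ⊗ₜ g
    (g₁ - g₂) *
        ((f₁ + @algebraMap ℂ (Fod P Q c ⊗[ℂ] Fod P Q c) _ Algebra.TensorProduct.instSemiring _ c) * g₁ + (f₂ + @algebraMap ℂ (Fod P Q c ⊗[ℂ] Fod P Q c) _ Algebra.TensorProduct.instSemiring _ c) * g₂
          - ((1 : ℂ)/2) • Polynomial.aeval f₁ Q - ((1 : ℂ)/2) • Polynomial.aeval f₂ Q)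
      = (f₁ - f₂) *
        (MvPolynomial.aeval ![f₁, f₂] δP +
          ((1 : ℂ)/2) • (MvPolynomial.aeval ![f₁, f₂] δQ * (g₁ + g₂)) - g₁ * g₂) := by
  intro f g f₁ f₂ g₁ g₂
  have h := Fod.isOdPoint P Q c
  exact (h.map Algebra.TensorProduct.includeLeft).secant_identity
    (h.map Algebra.TensorProduct.includeRight) (aeval_mul_divDiff hδP f₁ f₂)
    (aeval_mul_divDiff hδQ f₁ f₂)

/-- In `F_od ⊗ F_od` the identity
`(g₁−g₂)·[(f₁+c)g₁+(f₂+c)g₂−½Q(f₁)−½Q(f₂)]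
  = (f₁−f₂)·[(P(f₁)−P(f₂))/(f₁−f₂) + (Q(f₁)−Q(f₂))(g₁+g₂)/(2(f₁−f₂)) − g₁g₂]`
holds, where divided differences of polynomials are interpreted as polynomials in
`f₁, f₂`; so the two defining equations for `λ_od` agree. -/
theorem stmt_7 (P Q : Polynomial ℂ) (c : ℂ) (hP : P.degree ≤ 3) (hQ : Q.degree ≤ 2)
    (δP δQ : MvPolynomial (Fin 2) ℂ)
    (hδP : (X 0 - X 1) * δP =
      Polynomial.aeval (X (0 : Fin 2) : MvPolynomial (Fin 2) ℂ) P - Polynomial.aeval (X 1) P)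
    (hδQ : (X 0 - X 1) * δQ =
      Polynomial.aeval (X (0 : Fin 2) : MvPolynomial (Fin 2) ℂ) Q - Polynomial.aeval (X 1) Q) :
    let f : Fod P Q c := Ideal.Quotient.mk _ (X 0)
    let g : Fod P Q c := Ideal.Quotient.mk _ (X 1)
    let f₁ : Fod P Q c ⊗[ℂ] Fod P Q c := f ⊗ₜ 1
    let f₂ : Fod P Q c ⊗[ℂ] Fod P Q c := 1 ⊗ₜ f
    let g₁ : Fod P Q c ⊗[ℂ] Fod P Q c := g ⊗ₜ 1
    let g₂ : Fod P Q c ⊗[ℂ] Fod P Q c := 1 ⊗ₜ g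
    (g₁ - g₂) *
        ((f₁ + @algebraMap ℂ (Fod P Q c ⊗[ℂ] Fod P Q c) _ Algebra.TensorProduct.instSemiring _ c) * g₁ + (f₂ + @algebraMap ℂ (Fod P Q c ⊗[ℂ] Fod P Q c) _ Algebra.TensorProduct.instSemiring _ c) * g₂
          - ((1 : ℂ)/2) • Polynomial.aeval f₁ Q - ((1 : ℂ)/2) • Polynomial.aeval f₂ Q)
      = (f₁ - f₂) *
        (MvPolynomial.aeval ![f₁, f₂] δP +
          ((1 : ℂ)/2) • (MvPolynomial.aeval ![f₁, f₂] δQ * (g₁ + g₂)) - g₁ * g₂) :=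
  stmt_7_general P Q c δP δQ hδP hδQ
end

section
/- The assignment D(f) = 2(f+c)g − Q(f), D(g) = P'(f) + Q'(f)g − g² gives a well-defined derivation of the algebra F_od = ℂ[f,g]/((f+c)g² − P(f) − Q(f)g); i.e., D((f+c)g² − P(f) − Q(f)g) lies in the ideal generated by (f+c)g² − P(f) − Q(f)g. -/
open MvPolynomial

lemma aux9 (P Q : Polynomial ℂ) (c : ℂ) :
    (MvPolynomial.mkDerivation ℂ
        (![2 * (X 0 + C c) * X 1 - Polynomial.aeval (X 0) Q,
          Polynomial.aeval (X 0) (Polynomial.derivative P)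
            + Polynomial.aeval (X 0) (Polynomial.derivative Q) * X 1 - X 1 ^ 2] :
          Fin 2 → MvPolynomial (Fin 2) ℂ))
      (((X 0 + C c) * X 1 ^ 2 - Polynomial.aeval (X 0) P - Polynomial.aeval (X 0) Q * X 1 :
        MvPolynomial (Fin 2) ℂ)) = 0 := by
  set D := (MvPolynomial.mkDerivation ℂ
      (![2 * (X 0 + C c) * X 1 - Polynomial.aeval (X 0) Q,
        Polynomial.aeval (X 0) (Polynomial.derivative P)
          + Polynomial.aeval (X 0) (Polynomial.derivative Q) * X 1 - X 1 ^ 2] :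
        Fin 2 → MvPolynomial (Fin 2) ℂ)) with hD
  have hf : D (X 0) = 2 * (X 0 + C c) * X 1 - Polynomial.aeval (X 0) Q := by
    rw [hD, mkDerivation_X]; rfl
  have hg : D (X 1) = Polynomial.aeval (X 0) (Polynomial.derivative P)
          + Polynomial.aeval (X 0) (Polynomial.derivative Q) * X 1 - X 1 ^ 2 := by
    rw [hD, mkDerivation_X]; rfl
  have hC : D (C c) = 0 := by
    rw [hD]; exact (mkDerivation ℂ _).map_algebraMap c
  simp only [map_sub, Derivation.leibniz, Derivation.leibniz_pow, Derivation.map_aeval,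
    map_add, hf, hg, hC, smul_eq_mul]
  ring

/-- The assignment `D(f) = 2(f+c)g − Q(f)`, `D(g) = P'(f) + Q'(f)g − g²` gives a
well-defined derivation of `F_od = ℂ[f,g]/((f+c)g² − P(f) − Q(f)g)`: the derivation of
`ℂ[f,g]` with these values on the generators maps the defining relation into the ideal
it generates (here `X 0` is `f` and `X 1` is `g`). -/
theorem stmt_9 (P Q : Polynomial ℂ) (c : ℂ) (hP : P.degree ≤ 3) (hQ : Q.degree ≤ 2) :
    (MvPolynomial.mkDerivation ℂ
        ![2 * (X 0 + C c) * X 1 - Polynomial.aeval (X 0) Q,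
          Polynomial.aeval (X 0) (Polynomial.derivative P)
            + Polynomial.aeval (X 0) (Polynomial.derivative Q) * X 1 - X 1 ^ 2])
      ((X 0 + C c) * X 1 ^ 2 - Polynomial.aeval (X 0) P - Polynomial.aeval (X 0) Q * X 1)
      ∈ Ideal.span
        {((X 0 + C c) * X 1 ^ 2 - Polynomial.aeval (X 0) P - Polynomial.aeval (X 0) Q * X 1 :
          MvPolynomial (Fin 2) ℂ)} := by
  rw [aux9 P Q c]
  exact Ideal.zero_mem _
end

section
/- The star product f ⋆ g(z_1,...,z_{a+b}) = (1/(a!b!)) Σ_{σ ∈ S_{a+b}} f(z_{σ(1)},...,z_{σ(a)}) g(z_{σ(a+1)},...,z_{σ(a+b)}) ∏_{1≤p≤a, a+1≤q≤a+b} λ(z_{σ(p)}, z_{σ(q)}) on the graded space A_λ = ℂ ⊕ F_1 ⊕ F_2 ⊕ ... (F_m = symmetric functions in m variables) is associative for an arbitrary function λ of two variables. -/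
/-- A symmetric function of `m` variables. -/
def IsSymmFn {m : ℕ} (f : (Fin m → ℂ) → ℂ) : Prop :=
  ∀ σ : Equiv.Perm (Fin m), ∀ z : Fin m → ℂ, f (z ∘ σ) = f z

/-- The star product
`f ⋆ g(z₁,...,z_{a+b}) = (1/(a!b!)) Σ_{σ ∈ S_{a+b}} f(z_{σ(1)},...,z_{σ(a)})
  g(z_{σ(a+1)},...,z_{σ(a+b)}) ∏_{p ≤ a < q} λ(z_{σ(p)}, z_{σ(q)})`. -/
noncomputable def starProd (lam : ℂ → ℂ → ℂ) {a b : ℕ}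
    (f : (Fin a → ℂ) → ℂ) (g : (Fin b → ℂ) → ℂ) : (Fin (a + b) → ℂ) → ℂ :=
  fun z => ((a.factorial * b.factorial : ℕ) : ℂ)⁻¹ *
    ∑ σ : Equiv.Perm (Fin (a + b)),
      f (fun p => z (σ (Fin.castAdd b p))) * g (fun q => z (σ (Fin.natAdd a q))) *
        ∏ p : Fin a, ∏ q : Fin b,
          lam (z (σ (Fin.castAdd b p))) (z (σ (Fin.natAdd a q)))

namespace StarAssocAux

open Equiv Finset

/-- Embedding of a permutation of the first `m` coordinates into `S_{m+n}`. -/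
noncomputable def iotaL {m n : ℕ} (τ : Equiv.Perm (Fin m)) : Equiv.Perm (Fin (m + n)) :=
  finSumFinEquiv.permCongr (τ.sumCongr (Equiv.refl (Fin n)))

/-- Embedding of a permutation of the last `n` coordinates into `S_{m+n}`. -/
noncomputable def iotaR {m n : ℕ} (τ : Equiv.Perm (Fin n)) : Equiv.Perm (Fin (m + n)) :=
  finSumFinEquiv.permCongr ((Equiv.refl (Fin m)).sumCongr τ)

@[simp] lemma iotaL_castAdd {m n : ℕ} (τ : Equiv.Perm (Fin m)) (j : Fin m) :
    iotaL (n := n) τ (Fin.castAdd n j) = Fin.castAdd n (τ j) := by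
  simp [iotaL, Equiv.permCongr_apply]

@[simp] lemma iotaL_natAdd {m n : ℕ} (τ : Equiv.Perm (Fin m)) (r : Fin n) :
    iotaL (n := n) τ (Fin.natAdd m r) = Fin.natAdd m r := by
  simp [iotaL, Equiv.permCongr_apply]

@[simp] lemma iotaR_castAdd {m n : ℕ} (τ : Equiv.Perm (Fin n)) (j : Fin m) :
    iotaR (m := m) τ (Fin.castAdd n j) = Fin.castAdd n j := by
  simp [iotaR, Equiv.permCongr_apply]

@[simp] lemma iotaR_natAdd {m n : ℕ} (τ : Equiv.Perm (Fin n)) (r : Fin n) :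
    iotaR (m := m) τ (Fin.natAdd m r) = Fin.natAdd m (τ r) := by
  simp [iotaR, Equiv.permCongr_apply]

/-- The fully symmetrized triple product, indexed as `(a + b) + c`. -/
noncomputable def Phi (lam : ℂ → ℂ → ℂ) {a b c : ℕ}
    (f : (Fin a → ℂ) → ℂ) (g : (Fin b → ℂ) → ℂ) (h : (Fin c → ℂ) → ℂ)
    (z : Fin (a + b + c) → ℂ) (π : Equiv.Perm (Fin (a + b + c))) : ℂ :=
  f (fun p => z (π (Fin.castAdd c (Fin.castAdd b p)))) *
  g (fun q => z (π (Fin.castAdd c (Fin.natAdd a q)))) *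
  h (fun r => z (π (Fin.natAdd (a + b) r))) *
  ((∏ p : Fin a, ∏ q : Fin b,
      lam (z (π (Fin.castAdd c (Fin.castAdd b p)))) (z (π (Fin.castAdd c (Fin.natAdd a q))))) *
   (∏ p : Fin a, ∏ r : Fin c,
      lam (z (π (Fin.castAdd c (Fin.castAdd b p)))) (z (π (Fin.natAdd (a + b) r)))) *
   (∏ q : Fin b, ∏ r : Fin c,
      lam (z (π (Fin.castAdd c (Fin.natAdd a q)))) (z (π (Fin.natAdd (a + b) r)))))

/-- The fully symmetrized triple product, indexed as `a + (b + c)`. -/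
noncomputable def Psi (lam : ℂ → ℂ → ℂ) {a b c : ℕ}
    (f : (Fin a → ℂ) → ℂ) (g : (Fin b → ℂ) → ℂ) (h : (Fin c → ℂ) → ℂ)
    (z : Fin (a + (b + c)) → ℂ) (π : Equiv.Perm (Fin (a + (b + c)))) : ℂ :=
  f (fun p => z (π (Fin.castAdd (b + c) p))) *
  g (fun q => z (π (Fin.natAdd a (Fin.castAdd c q)))) *
  h (fun r => z (π (Fin.natAdd a (Fin.natAdd b r)))) *
  ((∏ p : Fin a, ∏ q : Fin b,
      lam (z (π (Fin.castAdd (b + c) p))) (z (π (Fin.natAdd a (Fin.castAdd c q))))) *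
   (∏ p : Fin a, ∏ r : Fin c,
      lam (z (π (Fin.castAdd (b + c) p))) (z (π (Fin.natAdd a (Fin.natAdd b r))))) *
   (∏ q : Fin b, ∏ r : Fin c,
      lam (z (π (Fin.natAdd a (Fin.castAdd c q)))) (z (π (Fin.natAdd a (Fin.natAdd b r))))))

lemma lhs_eq (lam : ℂ → ℂ → ℂ) {a b c : ℕ}
    (f : (Fin a → ℂ) → ℂ) (g : (Fin b → ℂ) → ℂ) (h : (Fin c → ℂ) → ℂ)
    (z : Fin (a + b + c) → ℂ) :
    starProd lam (starProd lam f g) h z =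
      ((a.factorial * b.factorial * c.factorial : ℕ) : ℂ)⁻¹ *
        ∑ π : Equiv.Perm (Fin (a + b + c)), Phi lam f g h z π := by
  have step : ∀ σ : Equiv.Perm (Fin (a + b + c)),
      (starProd lam f g) (fun p => z (σ (Fin.castAdd c p))) *
        h (fun q => z (σ (Fin.natAdd (a + b) q))) *
        (∏ p : Fin (a + b), ∏ q : Fin c,
          lam (z (σ (Fin.castAdd c p))) (z (σ (Fin.natAdd (a + b) q)))) =
      ((a.factorial * b.factorial : ℕ) : ℂ)⁻¹ *
        ∑ τ : Equiv.Perm (Fin (a + b)), Phi lam f g h z (σ * iotaL τ) := by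
    intro σ
    rw [starProd, mul_assoc, mul_assoc, Finset.sum_mul]
    congr 1
    refine Finset.sum_congr rfl fun τ _ => ?_
    have hP : (∏ p : Fin (a + b), ∏ q : Fin c,
          lam (z (σ (Fin.castAdd c p))) (z (σ (Fin.natAdd (a + b) q)))) =
        (∏ p : Fin a, ∏ r : Fin c,
          lam (z (σ (Fin.castAdd c (τ (Fin.castAdd b p))))) (z (σ (Fin.natAdd (a + b) r)))) *
        (∏ q : Fin b, ∏ r : Fin c,
          lam (z (σ (Fin.castAdd c (τ (Fin.natAdd a q))))) (z (σ (Fin.natAdd (a + b) r)))) := by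
      rw [← Equiv.prod_comp τ (fun p => ∏ q : Fin c,
        lam (z (σ (Fin.castAdd c p))) (z (σ (Fin.natAdd (a + b) q)))), Fin.prod_univ_add]
    simp only [Phi, Equiv.Perm.mul_apply, iotaL_castAdd, iotaL_natAdd, hP]
    ring
  rw [starProd]
  simp only [step]
  rw [← Finset.mul_sum, Finset.sum_comm]
  have hsum : ∀ τ : Equiv.Perm (Fin (a + b)),
      (∑ σ : Equiv.Perm (Fin (a + b + c)), Phi lam f g h z (σ * iotaL τ)) =
        ∑ π : Equiv.Perm (Fin (a + b + c)), Phi lam f g h z π := by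
    intro τ
    exact Equiv.sum_comp (Equiv.mulRight (iotaL τ)) (Phi lam f g h z)
  simp only [hsum]
  rw [Finset.sum_const, Finset.card_univ, Fintype.card_perm, Fintype.card_fin, nsmul_eq_mul]
  have h1 : (((a + b).factorial : ℕ) : ℂ) ≠ 0 := Nat.cast_ne_zero.mpr (Nat.factorial_ne_zero _)
  have h2 : ((a.factorial : ℕ) : ℂ) ≠ 0 := Nat.cast_ne_zero.mpr (Nat.factorial_ne_zero _)
  have h3 : ((b.factorial : ℕ) : ℂ) ≠ 0 := Nat.cast_ne_zero.mpr (Nat.factorial_ne_zero _)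
  have h4 : ((c.factorial : ℕ) : ℂ) ≠ 0 := Nat.cast_ne_zero.mpr (Nat.factorial_ne_zero _)
  push_cast
  field_simp

lemma rhs_eq (lam : ℂ → ℂ → ℂ) {a b c : ℕ}
    (f : (Fin a → ℂ) → ℂ) (g : (Fin b → ℂ) → ℂ) (h : (Fin c → ℂ) → ℂ)
    (z : Fin (a + (b + c)) → ℂ) :
    starProd lam f (starProd lam g h) z =
      ((a.factorial * b.factorial * c.factorial : ℕ) : ℂ)⁻¹ *
        ∑ π : Equiv.Perm (Fin (a + (b + c))), Psi lam f g h z π := by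
  have step : ∀ σ : Equiv.Perm (Fin (a + (b + c))),
      f (fun p => z (σ (Fin.castAdd (b + c) p))) *
        (starProd lam g h) (fun q => z (σ (Fin.natAdd a q))) *
        (∏ p : Fin a, ∏ q : Fin (b + c),
          lam (z (σ (Fin.castAdd (b + c) p))) (z (σ (Fin.natAdd a q)))) =
      ((b.factorial * c.factorial : ℕ) : ℂ)⁻¹ *
        ∑ τ : Equiv.Perm (Fin (b + c)), Psi lam f g h z (σ * iotaR τ) := by
    intro σ
    rw [starProd]
    conv_lhs => rw [show ∀ (x y s p : ℂ), x * (y * s) * p = y * (s * (x * p)) from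
      fun _ _ _ _ => by ring]
    rw [Finset.sum_mul]
    congr 1
    refine Finset.sum_congr rfl fun τ _ => ?_
    have hP : (∏ p : Fin a, ∏ q : Fin (b + c),
          lam (z (σ (Fin.castAdd (b + c) p))) (z (σ (Fin.natAdd a q)))) =
        (∏ p : Fin a, ∏ q : Fin b,
          lam (z (σ (Fin.castAdd (b + c) p))) (z (σ (Fin.natAdd a (τ (Fin.castAdd c q)))))) *
        (∏ p : Fin a, ∏ r : Fin c,
          lam (z (σ (Fin.castAdd (b + c) p))) (z (σ (Fin.natAdd a (τ (Fin.natAdd b r)))))) := by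
      rw [← Finset.prod_mul_distrib]
      refine Finset.prod_congr rfl fun p _ => ?_
      rw [← Equiv.prod_comp τ (fun q =>
        lam (z (σ (Fin.castAdd (b + c) p))) (z (σ (Fin.natAdd a q)))), Fin.prod_univ_add]
    simp only [Psi, Equiv.Perm.mul_apply, iotaR_castAdd, iotaR_natAdd, hP]
    ring
  rw [starProd]
  simp only [step]
  rw [← Finset.mul_sum, Finset.sum_comm]
  have hsum : ∀ τ : Equiv.Perm (Fin (b + c)),
      (∑ σ : Equiv.Perm (Fin (a + (b + c))), Psi lam f g h z (σ * iotaR τ)) =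
        ∑ π : Equiv.Perm (Fin (a + (b + c))), Psi lam f g h z π := by
    intro τ
    exact Equiv.sum_comp (Equiv.mulRight (iotaR τ)) (Psi lam f g h z)
  simp only [hsum]
  rw [Finset.sum_const, Finset.card_univ, Fintype.card_perm, Fintype.card_fin, nsmul_eq_mul]
  have h1 : (((b + c).factorial : ℕ) : ℂ) ≠ 0 := Nat.cast_ne_zero.mpr (Nat.factorial_ne_zero _)
  have h2 : ((a.factorial : ℕ) : ℂ) ≠ 0 := Nat.cast_ne_zero.mpr (Nat.factorial_ne_zero _)
  have h3 : ((b.factorial : ℕ) : ℂ) ≠ 0 := Nat.cast_ne_zero.mpr (Nat.factorial_ne_zero _)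
  have h4 : ((c.factorial : ℕ) : ℂ) ≠ 0 := Nat.cast_ne_zero.mpr (Nat.factorial_ne_zero _)
  push_cast
  field_simp

@[simp] lemma cast1 {a b c : ℕ} (p : Fin a) :
    (finCongr (add_assoc a b c)).symm (Fin.castAdd (b + c) p) =
      Fin.castAdd c (Fin.castAdd b p) := by
  ext; simp

@[simp] lemma cast2 {a b c : ℕ} (q : Fin b) :
    (finCongr (add_assoc a b c)).symm (Fin.natAdd a (Fin.castAdd c q)) =
      Fin.castAdd c (Fin.natAdd a q) := by
  ext; simp

@[simp] lemma cast3 {a b c : ℕ} (r : Fin c) :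
    (finCongr (add_assoc a b c)).symm (Fin.natAdd a (Fin.natAdd b r)) =
      Fin.natAdd (a + b) r := by
  ext; simp [add_assoc]

lemma psi_permCongr (lam : ℂ → ℂ → ℂ) {a b c : ℕ}
    (f : (Fin a → ℂ) → ℂ) (g : (Fin b → ℂ) → ℂ) (h : (Fin c → ℂ) → ℂ)
    (z : Fin (a + b + c) → ℂ) (π : Equiv.Perm (Fin (a + b + c))) :
    Psi lam f g h (fun i => z (Fin.cast (add_assoc a b c).symm i))
        ((finCongr (add_assoc a b c)).permCongr π) = Phi lam f g h z π := by
  have key : ∀ i : Fin (a + b + c),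
      z (Fin.cast (add_assoc a b c).symm (finCongr (add_assoc a b c) (π i))) = z (π i) := by
    intro i
    congr 1
  simp only [Psi, Phi, Equiv.permCongr_apply, cast1, cast2, cast3, key]

end StarAssocAux

/-- The star product on `A_λ = ℂ ⊕ F₁ ⊕ F₂ ⊕ ...` (with `F_m` the symmetric functions of
`m` variables) is associative for an arbitrary function `λ` of two variables. -/
theorem stmt_11 (lam : ℂ → ℂ → ℂ) {a b c : ℕ}
    (f : (Fin a → ℂ) → ℂ) (g : (Fin b → ℂ) → ℂ) (h : (Fin c → ℂ) → ℂ)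
    (hf : IsSymmFn f) (hg : IsSymmFn g) (hh : IsSymmFn h) :
    ∀ z : Fin (a + b + c) → ℂ,
      starProd lam (starProd lam f g) h z =
        starProd lam f (starProd lam g h)
          (fun i => z (Fin.cast (add_assoc a b c).symm i)) := by
  intro z
  rw [StarAssocAux.lhs_eq, StarAssocAux.rhs_eq]
  congr 1
  rw [← Equiv.sum_comp ((finCongr (add_assoc a b c)).permCongr)
    (StarAssocAux.Psi lam f g h (fun i => z (Fin.cast (add_assoc a b c).symm i)))]
  exact Finset.sum_congr rfl fun π _ =>
    (StarAssocAux.psi_permCongr lam f g h z π).symm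
end

section
/- Let μ be an antisymmetric function of one variable (μ(−s) = −μ(s)) and α a constant. Then the bracket on differentiable functions of one variable defined by {f,g}(x,y) = (f(x)g(y) − g(x)f(y))μ(x−y) + α(f(x)g'(y) + f(y)g'(x) − g(x)f'(y) − g(y)f'(x)) is bilinear, skew-symmetric, symmetric under exchange of x and y, and satisfies the Leibniz-type compatibility making it extend to a Poisson bracket on the symmetric algebra; in particular the trilinear Jacobi expression Σ_cyc {f,{g,h}} vanishes (where the extension of the bracket to symmetric functions of two variables is by derivation in each argument, evaluated via the symmetrization rules of the functional construction). -/
/-!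
Bilinearity, skew-symmetry and the `x ↔ y` symmetry are direct from the formula, the last one
because `μ` is odd. For the Jacobi identity, the derivatives of `{g,h}` in either variable are
computed explicitly; the cyclic sum is then a polynomial in the values and first two derivatives
of `f, g, h` at `x, y, z` and in `μ, μ'` at the pairwise differences. Since `μ` is odd and `μ'`
is even, every difference can be taken in one orientation, and the polynomial vanishes
identically.
-/

/-- The bracket of the functional construction on functions of one variable:
`{f,g}(x,y) = (f(x)g(y) − g(x)f(y))μ(x−y) + α(f(x)g'(y) + f(y)g'(x) − g(x)f'(y) − g(y)f'(x))`. -/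
noncomputable def br1 (μ : ℂ → ℂ) (α : ℂ) (f g : ℂ → ℂ) : ℂ → ℂ → ℂ :=
  fun x y => (f x * g y - g x * f y) * μ (x - y) +
    α * (f x * deriv g y + f y * deriv g x - g x * deriv f y - g y * deriv f x)

/-- The extension of the bracket of the functional construction to a bracket between a
function of one variable and a symmetric function of two variables (the first-order term
of `f ⋆ G − G ⋆ f` in the functional construction with shift), as needed to evaluate the
Jacobi expression on the symmetric algebra. -/
noncomputable def br12 (μ : ℂ → ℂ) (α : ℂ) (f : ℂ → ℂ) (G : ℂ → ℂ → ℂ) : ℂ → ℂ → ℂ → ℂ :=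
  fun x y z =>
    (f x * G y z * (μ (x - y) + μ (x - z)) +
      α * (f x * (deriv (fun t => G t z) y + deriv (fun t => G y t) z)
        - 2 * deriv f x * G y z)) +
    (f y * G z x * (μ (y - z) + μ (y - x)) +
      α * (f y * (deriv (fun t => G t x) z + deriv (fun t => G z t) x)
        - 2 * deriv f y * G z x)) +
    (f z * G x y * (μ (z - x) + μ (z - y)) +
      α * (f z * (deriv (fun t => G t y) x + deriv (fun t => G x t) y)
        - 2 * deriv f z * G x y))

lemma Function.Odd.deriv_even {𝕜 F : Type*} [NontriviallyNormedField 𝕜] [NormedAddCommGroup F]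
    [NormedSpace 𝕜 F] {f : 𝕜 → F} (hf : f.Odd) : (deriv f).Even := by
  intro s
  have hf_neg : f = fun x => -f (-x) := funext fun x => by rw [hf, neg_neg]
  conv_lhs => rw [hf_neg]
  rw [deriv.fun_neg, deriv_comp_neg, neg_neg, neg_neg]

lemma deriv_const_mul_add_const_mul {u v : ℂ → ℂ} {t : ℂ} (hu : DifferentiableAt ℂ u t)
    (hv : DifferentiableAt ℂ v t) (a b : ℂ) :
    deriv (fun s => a * u s + b * v s) t = a * deriv u t + b * deriv v t := by
  rw [deriv_fun_add (hu.const_mul a) (hv.const_mul b), deriv_const_mul a hu, deriv_const_mul b hv]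

section Bracket

variable {μ : ℂ → ℂ} {α : ℂ} {f g : ℂ → ℂ}

lemma br1_lincomb_left {u v : ℂ → ℂ} (hu : Differentiable ℂ u) (hv : Differentiable ℂ v)
    (a b : ℂ) (w : ℂ → ℂ) (x y : ℂ) :
    br1 μ α (fun t => a * u t + b * v t) w x y = a * br1 μ α u w x y + b * br1 μ α v w x y := by
  simp only [br1, deriv_const_mul_add_const_mul (hu _) (hv _)]
  ring

lemma br1_lincomb_right {u v : ℂ → ℂ} (hu : Differentiable ℂ u) (hv : Differentiable ℂ v)
    (a b : ℂ) (w : ℂ → ℂ) (x y : ℂ) :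
    br1 μ α w (fun t => a * u t + b * v t) x y = a * br1 μ α w u x y + b * br1 μ α w v x y := by
  simp only [br1, deriv_const_mul_add_const_mul (hu _) (hv _)]
  ring

variable (μ α f g) in
lemma br1_antisymm (x y : ℂ) : br1 μ α f g x y = -br1 μ α g f x y := by
  simp only [br1]
  ring

lemma br1_symm (hμ : μ.Odd) (x y : ℂ) : br1 μ α f g y x = br1 μ α f g x y := by
  simp only [br1]
  rw [← neg_sub x y, hμ]
  ring

lemma hasDerivAt_br1_fst (hμ : Differentiable ℂ μ) (hf : Differentiable ℂ f)
    (hg : Differentiable ℂ g) (x y : ℂ) :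
    HasDerivAt (fun t => br1 μ α f g t y)
      ((deriv f x * g y - deriv g x * f y) * μ (x - y) +
        (f x * g y - g x * f y) * deriv μ (x - y) +
        α * (deriv f x * deriv g y + f y * deriv (deriv g) x
          - deriv g x * deriv f y - g y * deriv (deriv f) x)) x := by
  have hμ_sub : HasDerivAt (fun t => μ (t - y)) (deriv μ (x - y)) x := by
    simpa using (hμ (x - y)).hasDerivAt.comp_sub_const x y
  have h_mu_term := (((hf x).hasDerivAt.mul_const (g y)).sub
    ((hg x).hasDerivAt.mul_const (f y))).mul hμ_sub
  have h_alpha_term := (((((hf x).hasDerivAt.mul_const (deriv g y)).add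
    ((hg.deriv x).hasDerivAt.const_mul (f y))).sub
      ((hg x).hasDerivAt.mul_const (deriv f y))).sub
        ((hf.deriv x).hasDerivAt.const_mul (g y))).const_mul α
  exact h_mu_term.add h_alpha_term

lemma deriv_br1_fst (hμ : Differentiable ℂ μ) (hf : Differentiable ℂ f)
    (hg : Differentiable ℂ g) (x y : ℂ) :
    deriv (fun t => br1 μ α f g t y) x =
      (deriv f x * g y - deriv g x * f y) * μ (x - y) +
        (f x * g y - g x * f y) * deriv μ (x - y) +
        α * (deriv f x * deriv g y + f y * deriv (deriv g) x
          - deriv g x * deriv f y - g y * deriv (deriv f) x) :=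
  (hasDerivAt_br1_fst hμ hf hg x y).deriv

lemma deriv_br1_snd (hμ_odd : μ.Odd) (hμ : Differentiable ℂ μ) (hf : Differentiable ℂ f)
    (hg : Differentiable ℂ g) (x y : ℂ) :
    deriv (fun t => br1 μ α f g x t) y =
      (deriv f y * g x - deriv g y * f x) * μ (y - x) +
        (f y * g x - g y * f x) * deriv μ (y - x) +
        α * (deriv f y * deriv g x + f x * deriv (deriv g) y
          - deriv g y * deriv f x - g x * deriv (deriv f) y) := by
  simp only [br1_symm hμ_odd _ x]
  exact deriv_br1_fst hμ hf hg y x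

lemma br12_br1_cyclic_sum_eq_zero {h : ℂ → ℂ} (hμ_odd : μ.Odd) (hμ : Differentiable ℂ μ)
    (hf : Differentiable ℂ f) (hg : Differentiable ℂ g) (hh : Differentiable ℂ h) (x y z : ℂ) :
    br12 μ α f (br1 μ α g h) x y z + br12 μ α g (br1 μ α h f) x y z +
      br12 μ α h (br1 μ α f g) x y z = 0 := by
  have hμ_swap : ∀ a b, μ (b - a) = -μ (a - b) := fun a b => by rw [← neg_sub, hμ_odd]
  have hμ'_swap : ∀ a b, deriv μ (b - a) = deriv μ (a - b) :=
    fun a b => by rw [← neg_sub, hμ_odd.deriv_even]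
  simp only [br12, deriv_br1_fst hμ hf hg, deriv_br1_fst hμ hg hh, deriv_br1_fst hμ hh hf,
    deriv_br1_snd hμ_odd hμ hf hg, deriv_br1_snd hμ_odd hμ hg hh, deriv_br1_snd hμ_odd hμ hh hf]
  simp only [br1, hμ_swap x y, hμ_swap x z, hμ_swap y z, hμ'_swap x y, hμ'_swap x z, hμ'_swap y z]
  ring

end Bracket

/-- For antisymmetric `μ` and a constant `α`, the bracket
`{f,g}(x,y) = (f(x)g(y) − g(x)f(y))μ(x−y) + α(f(x)g'(y)+f(y)g'(x)−g(x)f'(y)−g(y)f'(x))`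
is bilinear, skew-symmetric, symmetric under exchange of `x` and `y`, and the trilinear
Jacobi expression `Σ_cyc {f,{g,h}}` (evaluated via the extension `br12` of the functional
construction) vanishes. -/
theorem stmt_13 (μ : ℂ → ℂ) (hμodd : ∀ s, μ (-s) = - μ s) (α : ℂ)
    (hμ : ContDiff ℂ ⊤ μ) (f g h : ℂ → ℂ)
    (hf : ContDiff ℂ ⊤ f) (hg : ContDiff ℂ ⊤ g) (hh : ContDiff ℂ ⊤ h) :
    (∀ (a b : ℂ) (u v w : ℂ → ℂ), Differentiable ℂ u → Differentiable ℂ v →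
      Differentiable ℂ w →
      (∀ x y, br1 μ α (fun t => a * u t + b * v t) w x y =
        a * br1 μ α u w x y + b * br1 μ α v w x y) ∧
      (∀ x y, br1 μ α w (fun t => a * u t + b * v t) x y =
        a * br1 μ α w u x y + b * br1 μ α w v x y)) ∧
    (∀ x y, br1 μ α f g x y = - br1 μ α g f x y) ∧
    (∀ x y, br1 μ α f g x y = br1 μ α f g y x) ∧
    (∀ x y z,
      br12 μ α f (br1 μ α g h) x y z + br12 μ α g (br1 μ α h f) x y z +
        br12 μ α h (br1 μ α f g) x y z = 0) := by
  have hμ_diff : Differentiable ℂ μ := hμ.differentiable (by simp)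
  have hf_diff : Differentiable ℂ f := hf.differentiable (by simp)
  have hg_diff : Differentiable ℂ g := hg.differentiable (by simp)
  have hh_diff : Differentiable ℂ h := hh.differentiable (by simp)
  exact ⟨fun a b u v w hu hv _ => ⟨br1_lincomb_left hu hv a b w, br1_lincomb_right hu hv a b w⟩,
    br1_antisymm μ α f g, fun x y => (br1_symm hμodd x y).symm,
    br12_br1_cyclic_sum_eq_zero hμodd hμ_diff hf_diff hg_diff hh_diff⟩
end

section
/- Let {f,g}(x,y) = (f(x)g(y)−g(x)f(y))μ(x−y) + α(f(x)g'(y)+f(y)g'(x)−g(x)f'(y)−g(y)f'(x)) be the bracket of the functional construction, and let κ be a function with ακ' = −ν. Then under the rescaling f ↦ κf, g ↦ κg, the bracket transforms as {κf, κg}(x,y) = κ(x)κ(y)·[(f(x)g(y)−g(x)f(y))(μ(x−y)+ν(x)−ν(y)) + α(f(x)g'(y)+f(y)g'(x)−g(x)f'(y)−g(y)f'(x))]; i.e., the generalized bracket with the extra term ν(x)−ν(y) is obtained from the original one by this gauge transformation. -/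
/-- Gauge transformation of the functional bracket: with `ακ' = −νκ`, rescaling
`f ↦ κf, g ↦ κg` takes the bracket
`{f,g}(x,y) = (f(x)g(y)−g(x)f(y))μ(x−y) + α(f(x)g'(y)+f(y)g'(x)−g(x)f'(y)−g(y)f'(x))`
to `κ(x)κ(y)` times the generalized bracket with `μ(x−y)` replaced by
`μ(x−y)+ν(x)−ν(y)`. -/
theorem stmt_14 (μ ν κ f g : ℂ → ℂ) (α : ℂ)
    (hf : Differentiable ℂ f) (hg : Differentiable ℂ g) (hκ : Differentiable ℂ κ)
    (hκν : ∀ x, α * deriv κ x = - (ν x * κ x)) :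
    ∀ x y : ℂ,
      ((κ x * f x) * (κ y * g y) - (κ x * g x) * (κ y * f y)) * μ (x - y) +
        α * ((κ x * f x) * deriv (fun t => κ t * g t) y +
          (κ y * f y) * deriv (fun t => κ t * g t) x -
          (κ x * g x) * deriv (fun t => κ t * f t) y -
          (κ y * g y) * deriv (fun t => κ t * f t) x)
      = κ x * κ y *
          ((f x * g y - g x * f y) * (μ (x - y) + ν x - ν y) +
            α * (f x * deriv g y + f y * deriv g x - g x * deriv f y - g y * deriv f x)) := by
  intro x y
  have dg : ∀ t, deriv (fun t => κ t * g t) t = deriv κ t * g t + κ t * deriv g t := fun t =>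
    deriv_mul (hκ t) (hg t)
  have df : ∀ t, deriv (fun t => κ t * f t) t = deriv κ t * f t + κ t * deriv f t := fun t =>
    deriv_mul (hκ t) (hf t)
  rw [dg, dg, df, df]
  have hx := hκν x
  have hy := hκν y
  linear_combination (κ x * f x * g y - κ x * g x * f y) * hy +
    (κ y * f y * g x - κ y * g y * f x) * hx
end
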